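/- arXiv:0909.2294 — 8 statements merged into one kernel-verified Lean document; each statement's English description precedes it below -/
import Mathlib

section
/- Let G be a group and v ∈ G. Suppose that for every g ∈ G and every n ∈ ℕ there exist p, q ∈ ℕ with q ≥ 1, p ≥ n·q, and elements h₁, …, h_q ∈ G such that gᵖ = (h₁ v h₁⁻¹)(h₂ v h₂⁻¹)⋯(h_q v h_q⁻¹). Then every conjugation-invariant norm ν on G satisfies inf_{p≥1} ν(gᵖ)/p = 0 for every g ∈ G; in particular, G admits no stably unbounded conjugation-invariant norm. -/
variable {G : Type*} [Group G]

/-- A conjugation-invariant norm on a group `G`. -/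
def IsConjInvariantNorm (ν : G → ℝ) : Prop :=
  (∀ g : G, 0 ≤ ν g) ∧ (∀ g : G, ν g⁻¹ = ν g) ∧
    (∀ g h : G, ν (g * h) ≤ ν g + ν h) ∧
    (∀ g h : G, ν (h * g * h⁻¹) = ν g) ∧
    ν 1 = 0 ∧ (∀ g : G, g ≠ 1 → 0 < ν g)

private lemma prod_norm_le {G : Type*} [Group G] (ν : G → ℝ)
    (hsub : ∀ g h : G, ν (g * h) ≤ ν g + ν h) (hone : ν 1 = 0)
    (B : ℝ) : ∀ l : List G, (∀ x ∈ l, ν x ≤ B) → ν l.prod ≤ l.length * B := by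
  intro l
  induction l with
  | nil => intro _; simpa using le_of_eq hone
  | cons a t ih =>
    intro hmem
    have h1 : ν a ≤ B := hmem a (by simp)
    have h2 : ν t.prod ≤ t.length * B := ih fun x hx => hmem x (by simp [hx])
    calc ν (a :: t).prod = ν (a * t.prod) := by simp
      _ ≤ ν a + ν t.prod := hsub _ _
      _ ≤ B + t.length * B := add_le_add h1 h2
      _ = (a :: t).length * B := by push_cast [List.length_cons]; ring

theorem statement6 {G : Type*} [Group G] (v : G)
    (h : ∀ g : G, ∀ n : ℕ, ∃ p q : ℕ, 1 ≤ q ∧ n * q ≤ p ∧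
      ∃ c : Fin q → G, g ^ p = (List.ofFn fun i => c i * v * (c i)⁻¹).prod) :
    ∀ ν : G → ℝ, IsConjInvariantNorm ν → ∀ g : G,
      sInf {x : ℝ | ∃ p : ℕ, 1 ≤ p ∧ x = ν (g ^ p) / p} = 0 := by
  intro ν hν g
  obtain ⟨hpos, hinv, hsub, hconj, hone, hnz⟩ := hν
  set S : Set ℝ := {x : ℝ | ∃ p : ℕ, 1 ≤ p ∧ x = ν (g ^ p) / p} with hS
  -- key: for every n ≥ 1, there is x ∈ S with x ≤ ν v / n
  have key : ∀ n : ℕ, 1 ≤ n → ∃ x ∈ S, x ≤ ν v / n := by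
    intro n hn
    obtain ⟨p, q, hq, hpq, c, hc⟩ := h g n
    have hp1 : 1 ≤ p := le_trans (by nlinarith) hpq
    have hple : ν (g ^ p) ≤ q * ν v := by
      have := prod_norm_le ν hsub hone (ν v)
        (List.ofFn fun i => c i * v * (c i)⁻¹) ?_
      · simpa [hc] using this
      · intro x hx
        simp only [List.mem_ofFn] at hx
        obtain ⟨i, rfl⟩ := hx
        exact le_of_eq (hconj v (c i))
    refine ⟨ν (g ^ p) / p, ⟨p, hp1, rfl⟩, ?_⟩
    have hp0 : (0:ℝ) < p := by exact_mod_cast hp1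
    have hn0 : (0:ℝ) < n := by exact_mod_cast hn
    rw [div_le_div_iff₀ hp0 hn0]
    have hnq : (n:ℝ) * q ≤ p := by exact_mod_cast hpq
    have hv0 : 0 ≤ ν v := hpos v
    calc ν (g ^ p) * n ≤ (q * ν v) * n := by
          exact mul_le_mul_of_nonneg_right hple hn0.le
      _ = ν v * ((n:ℝ) * q) := by ring
      _ ≤ ν v * p := mul_le_mul_of_nonneg_left hnq hv0
  have hSne : S.Nonempty := by
    obtain ⟨x, hx, _⟩ := key 1 le_rfl; exact ⟨x, hx⟩
  have hlb : ∀ x ∈ S, (0:ℝ) ≤ x := by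
    rintro x ⟨p, hp, rfl⟩
    exact div_nonneg (hpos _) (Nat.cast_nonneg p)
  have hbdd : BddBelow S := ⟨0, hlb⟩
  refine le_antisymm ?_ (le_csInf hSne hlb)
  refine le_of_forall_pos_le_add fun ε hε => ?_
  obtain ⟨n, hn⟩ := exists_nat_gt (ν v / ε)
  have hn1 : 1 ≤ max n 1 := le_max_right _ _
  obtain ⟨x, hxS, hxle⟩ := key (max n 1) hn1
  have hn0 : (0:ℝ) < max n 1 := by exact_mod_cast hn1
  have : ν v / (max n 1 : ℕ) < ε := by
    rw [div_lt_iff₀ hn0]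
    have : ν v / ε < n := hn
    have h1 : ν v < n * ε := by
      rw [div_lt_iff₀ hε] at this; linarith
    have h2 : (n:ℝ) ≤ (max n 1 : ℕ) := by exact_mod_cast le_max_left n 1
    nlinarith
  calc sInf S ≤ x := csInf_le hbdd hxS
    _ ≤ ν v / (max n 1 : ℕ) := hxle
    _ ≤ 0 + ε := by linarith
end

section
/- Let A and B be finite sets, R ⊆ A × B a relation from A to B, and f : B → ℕ. Then the following are equivalent: (I) there exists a function h : A → B such that (x, h(x)) ∈ R for every x ∈ A and |h⁻¹(y)| ≤ f(y) for every y ∈ B; (II) for every subset X ⊆ A, ∑_{y ∈ R(X)} f(y) ≥ |X|, where R(X) = { y ∈ B : ∃ x ∈ X, (x, y) ∈ R }. -/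
open scoped Classical in
/-- Capacitated version of Philip Hall's marriage theorem. -/
theorem statement7 {A B : Type*} [Fintype A] [Fintype B]
    (R : A → B → Prop) (f : B → ℕ) :
    (∃ h : A → B, (∀ x : A, R x (h x)) ∧
      ∀ y : B, (Finset.univ.filter fun x : A => h x = y).card ≤ f y) ↔
    (∀ X : Finset A,
      X.card ≤ ∑ y ∈ Finset.univ.filter (fun y : B => ∃ x ∈ X, R x y), f y) := by
  classical
  constructor
  · rintro ⟨h, hR, hcard⟩ X
    rw [Finset.card_eq_sum_card_fiberwise (f := h)
      (t := Finset.univ.filter (fun y : B => ∃ x ∈ X, R x y))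
      (fun x hx => Finset.mem_filter.mpr ⟨Finset.mem_univ _, ⟨x, hx, hR x⟩⟩)]
    refine Finset.sum_le_sum fun y _ => ?_
    exact le_trans (Finset.card_le_card (Finset.filter_subset_filter _ (Finset.subset_univ X)))
      (hcard y)
  · intro hall
    set t : A → Finset (Σ y : B, Fin (f y)) :=
      fun x => Finset.univ.filter (fun p => R x p.1) with ht
    have hbi : ∀ X : Finset A, X.biUnion t =
        (Finset.univ.filter (fun y : B => ∃ x ∈ X, R x y)).sigma (fun y => Finset.univ) := by
      intro X
      ext p
      simp [ht, Finset.mem_sigma, Finset.mem_biUnion]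
    have hcard : ∀ X : Finset A, (X.biUnion t).card =
        ∑ y ∈ Finset.univ.filter (fun y : B => ∃ x ∈ X, R x y), f y := by
      intro X
      rw [hbi, Finset.card_sigma]
      simp
    obtain ⟨g, hginj, hgmem⟩ :=
      (Finset.all_card_le_biUnion_card_iff_exists_injective t).mp
        (fun X => by rw [hcard]; exact hall X)
    refine ⟨fun x => (g x).1, fun x => ?_, fun y => ?_⟩
    · have := hgmem x
      simp only [ht, Finset.mem_filter] at this
      exact this.2
    · have hmap : ∀ x ∈ Finset.univ.filter (fun x : A => (g x).1 = y),
        g x ∈ (({y} : Finset B).sigma fun y' => (Finset.univ : Finset (Fin (f y')))) := by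
        intro x hx
        simp only [Finset.mem_filter] at hx
        simp [Finset.mem_sigma, hx.2]
      have := Finset.card_le_card_of_injOn g hmap (Set.injOn_of_injective hginj)
      simpa [Finset.card_sigma] using this
end

section
/- For every real ε > 0 and every L ∈ ℕ there exists a word w over the two-letter alphabet {a, b} such that: (i) w is a concatenation of copies of the words aa and bb; (ii) |w| ≥ L; (iii) w is not a proper power, i.e., there are no word u and integer k ≥ 2 with w = uᵏ; and (iv) whenever 0 ≤ r₁ < r₂ < |w| and s is a common prefix of the cyclic shift of w by r₁ and the cyclic shift of w by r₂, then |s| ≤ ε·|w|. (Such a word may be taken of the form w = ∏_{i=0}^{n} a^{2i} b^{2n−2i} with n sufficiently large.) -/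
private def NN (n : ℕ) : ℕ := 2*n*(n+1)

private def ff (n x : ℕ) : Bool :=
  decide (2 * ((x % NN n) / (2*n)) ≤ (x % NN n) % (2*n))

private lemma ff_congr {n x y : ℕ} (h : x % NN n = y % NN n) : ff n x = ff n y := by
  simp only [ff, h]

private lemma ff_of_mod_eq {n x v : ℕ} (h : x % NN n = v) (hv : v < NN n) :
    ff n x = ff n v :=
  ff_congr (by rw [h, Nat.mod_eq_of_lt hv])

private lemma ff_eval {n : ℕ} (hn : 1 ≤ n) (q t : ℕ) (ht : t < 2*n)
    (hlt : 2*n*q + t < NN n) : ff n (2*n*q + t) = decide (2*q ≤ t) := by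
  have h2n : 0 < 2*n := by omega
  have hm : (2*n*q + t) % NN n = 2*n*q + t := Nat.mod_eq_of_lt hlt
  simp only [ff, hm]
  rw [Nat.mul_add_div h2n, Nat.mul_add_mod, Nat.div_eq_of_lt ht, Nat.mod_eq_of_lt ht]
  simp

private lemma NN_pos {n : ℕ} (hn : 1 ≤ n) : 0 < NN n := by
  simp only [NN]; nlinarith

-- value at a boundary position 2nK + (2n-1), K < n : letter b (true)
private lemma val_boundary {n K : ℕ} (hn : 1 ≤ n) (hK : K < n) :
    ff n (2*n*K + (2*n-1)) = true := by
  rw [ff_eval hn K (2*n-1) (by omega)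
    (by simp only [NN]
        have h1 : 2*n*K + 2*n ≤ 2*n*(n+1) := by nlinarith
        omega)]
  simp; omega

-- values after boundary: a's
private lemma val_after {n K : ℕ} (hn : 1 ≤ n) (hK : K < n) (i : ℕ) (hi : i < 2*(K+1)) :
    ff n (2*n*(K+1) + i) = false := by
  rw [ff_eval hn (K+1) i (by omega)
    (by simp only [NN]
        have h1 : 2*n*(K+1) + 2*n ≤ 2*n*(n+1) := by nlinarith
        omega)]
  simp; omega

-- value at end of the a-run: b
private lemma val_end {n K : ℕ} (hn : 1 ≤ n) (hK : K < n) :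
    ff n (2*n*(K+1) + 2*(K+1)) = true := by
  rcases Nat.lt_or_ge (K+1) n with h | h
  · rw [ff_eval hn (K+1) (2*(K+1)) (by omega) (by simp only [NN]; nlinarith [h, hn])]
    simp
  · -- K+1 = n, the position is exactly NN n
    have hKn : K + 1 = n := by omega
    have : 2*n*(K+1) + 2*(K+1) = NN n := by simp only [NN]; nlinarith
    rw [this]
    have h0 : (NN n) % NN n = 0 := Nat.mod_self _
    have : ff n (NN n) = ff n 0 := ff_of_mod_eq h0 (NN_pos hn)
    rw [this]
    have : (0:ℕ) = 2*n*0 + 0 := by ring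
    rw [this, ff_eval hn 0 0 (by omega) (by rw [← this]; exact NN_pos hn)]
    simp
-- From any position, a "ba" boundary occurs within 4n steps
private lemma boundary_exists {n : ℕ} (hn : 1 ≤ n) (x : ℕ) :
    ∃ j K, j < 4*n ∧ K < n ∧ (x + j) % NN n = 2*n*K + (2*n-1) := by
  have h2n : 0 < 2*n := by omega
  have hNpos : 0 < NN n := NN_pos hn
  have hNval : NN n = 2*n*(n+1) := rfl
  obtain ⟨z, hzN, hxz⟩ : ∃ z, z < NN n ∧ x % NN n = z :=
    ⟨x % NN n, Nat.mod_lt _ hNpos, rfl⟩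
  obtain ⟨q, t, hqt, htlt⟩ : ∃ q t, z = 2*n*q + t ∧ t < 2*n :=
    ⟨z / (2*n), z % (2*n), (Nat.div_add_mod z (2*n)).symm, Nat.mod_lt _ h2n⟩
  have hmono : ∀ a b : ℕ, a ≤ b → 2*n*a ≤ 2*n*b := fun a b h => Nat.mul_le_mul_left _ h
  have hNn : 2*n*(n+1) = 2*n*n + 2*n := by ring
  have hxc : ∀ c, (x + c) % NN n = (z + c) % NN n := by
    intro c
    have hh : x % NN n = z % NN n := by rw [hxz, Nat.mod_eq_of_lt hzN]
    exact Nat.ModEq.add_right c hh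
  rcases Nat.lt_or_ge q n with hqlt | hqge
  · refine ⟨2*n - 1 - t, q, by omega, hqlt, ?_⟩
    rw [hxc]
    have hsum : z + (2*n-1-t) = 2*n*q + (2*n-1) := by omega
    rw [hsum]
    apply Nat.mod_eq_of_lt
    have hexp : 2*n*(q+1) = 2*n*q + 2*n := by ring
    have h3 := hmono (q+1) n hqlt
    omega
  · have hz2 : 2*n*n ≤ z := by
      have := hmono n q hqge
      omega
    refine ⟨NN n + (2*n-1) - z, 0, by omega, by omega, ?_⟩
    rw [hxc]
    have hsum : z + (NN n + (2*n-1) - z) = (2*n-1) + NN n := by omega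
    rw [hsum, Nat.add_mod_right]
    have h0 : 2*n*0 + (2*n-1) = 2*n-1 := by simp
    rw [h0]
    exact Nat.mod_eq_of_lt (by omega)

-- characterization: a "ba" transition can only happen at a boundary
private lemma boundary_char {n : ℕ} (hn : 1 ≤ n) (z : ℕ)
    (h1 : ff n z = true) (h2 : ff n (z+1) = false) :
    ∃ K, K < n ∧ z % NN n = 2*n*K + (2*n-1) := by
  have h2n : 0 < 2*n := by omega
  have hNpos : 0 < NN n := NN_pos hn
  have hNval : NN n = 2*n*(n+1) := rfl
  have hN1 : 1 < NN n := by
    have : 2*n*(n+1) = 2*n*n + 2*n := by ring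
    omega
  obtain ⟨z', hz'N, hzmod⟩ : ∃ z', z' < NN n ∧ z % NN n = z' :=
    ⟨z % NN n, Nat.mod_lt _ hNpos, rfl⟩
  obtain ⟨q, t, hqt, htlt⟩ : ∃ q t, z' = 2*n*q + t ∧ t < 2*n :=
    ⟨z' / (2*n), z' % (2*n), (Nat.div_add_mod z' (2*n)).symm, Nat.mod_lt _ h2n⟩
  have hmono : ∀ a b : ℕ, a ≤ b → 2*n*a ≤ 2*n*b := fun a b h => Nat.mul_le_mul_left _ h
  have hNn : 2*n*(n+1) = 2*n*n + 2*n := by ring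
  have hexp : 2*n*(q+1) = 2*n*q + 2*n := by ring
  have hqn : q ≤ n := by
    by_contra hc; push_neg at hc
    have := hmono (n+1) q hc
    omega
  have hf1 : 2*q ≤ t := by
    have he : ff n z = ff n z' := ff_of_mod_eq hzmod hz'N
    rw [h1, hqt, ff_eval hn q t htlt (by omega)] at he
    exact of_decide_eq_true he.symm
  rcases Nat.lt_or_ge t (2*n-1) with htl | htg
  · exfalso
    have hlt : z' + 1 < NN n := by
      rcases Nat.lt_or_ge q n with h' | h'
      · have h3 := hmono (q+1) n h'
        omega
      · have hqe : 2*n*q = 2*n*n := by rw [le_antisymm hqn h']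
        omega
    have hmod : (z+1) % NN n = z' + 1 := by
      rw [Nat.add_mod, hzmod, Nat.mod_eq_of_lt hN1]
      exact Nat.mod_eq_of_lt hlt
    have he := ff_of_mod_eq hmod hlt
    rw [h2] at he
    have h4 : z' + 1 = 2*n*q + (t+1) := by omega
    rw [h4, ff_eval hn q (t+1) (by omega) (by omega)] at he
    have := of_decide_eq_false he.symm
    omega
  · exact ⟨q, by omega, by omega⟩

-- main separation lemma
private lemma separation {n : ℕ} (hn : 1 ≤ n) (x y : ℕ)
    (h : ∀ j, j ≤ 6*n → ff n (x+j) = ff n (y+j)) : x % NN n = y % NN n := by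
  have hNpos : 0 < NN n := NN_pos hn
  obtain ⟨j, K, hj, hK, hb⟩ := boundary_exists hn x
  have hmono : ∀ a b : ℕ, a ≤ b → 2*n*a ≤ 2*n*b := fun a b h => Nat.mul_le_mul_left _ h
  have hNval : NN n = 2*n*(n+1) := rfl
  have hNn : 2*n*(n+1) = 2*n*n + 2*n := by ring
  have hblt : ∀ K', K' < n → 2*n*K' + (2*n-1) < NN n := by
    intro K' hK'
    have h3 := hmono (K'+1) n hK'
    have hexp : 2*n*(K'+1) = 2*n*K' + 2*n := by ring
    omega
  have hcongr : ∀ (z : ℕ) (Kz : ℕ), Kz < n → (z % NN n = 2*n*Kz + (2*n-1)) →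
      ∀ i, ff n (z + 1 + i) = ff n (2*n*(Kz+1) + i) := by
    intro z Kz hKz hbz i
    have h0 : z % NN n = (2*n*Kz + (2*n-1)) % NN n := by
      rw [hbz, Nat.mod_eq_of_lt (hblt Kz hKz)]
    have h1 := Nat.ModEq.add_right (1+i) h0
    have he : 2*n*Kz + (2*n-1) + (1+i) = 2*n*(Kz+1) + i := by
      have : 2*n*(Kz+1) = 2*n*Kz + 2*n := by ring
      omega
    rw [he] at h1
    have hassoc : z + 1 + i = z + (1+i) := by omega
    rw [hassoc]
    have h2 : (z + (1+i)) % NN n = (2*n*(Kz+1) + i) % NN n := h1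
    exact ff_congr h2
  have hx1 : ff n (x+j) = true := by
    rw [ff_of_mod_eq hb (hblt K hK)]; exact val_boundary hn hK
  have hx2 : ff n (x+j+1) = false := by
    have := hcongr (x+j) K hK hb 0
    rw [this]
    exact val_after hn hK 0 (by omega)
  have hy1 : ff n (y+j) = true := by
    have hh := h j (by omega)
    rw [← hh]; exact hx1
  have hy2 : ff n (y+j+1) = false := by
    have hh := h (j+1) (by omega)
    simp only [← Nat.add_assoc] at hh
    rw [← hh]; exact hx2
  obtain ⟨K', hK', hb'⟩ := boundary_char hn (y+j) hy1 hy2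
  have hKK : K = K' := by
    by_contra hne
    rcases Nat.lt_or_ge K K' with hlt | hge
    · have e1 : ff n (x + j + 1 + 2*(K+1)) = true := by
        rw [hcongr (x+j) K hK hb]; exact val_end hn hK
      have e2 : ff n (y + j + 1 + 2*(K+1)) = false := by
        rw [hcongr (y+j) K' hK' hb']; exact val_after hn hK' _ (by omega)
      have hh := h (j + 1 + 2*(K+1)) (by omega)
      simp only [← Nat.add_assoc] at hh
      rw [e1, e2] at hh
      simp at hh
    · have hlt : K' < K := by omega
      have e1 : ff n (x + j + 1 + 2*(K'+1)) = false := by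
        rw [hcongr (x+j) K hK hb]; exact val_after hn hK _ (by omega)
      have e2 : ff n (y + j + 1 + 2*(K'+1)) = true := by
        rw [hcongr (y+j) K' hK' hb']; exact val_end hn hK'
      have hh := h (j + 1 + 2*(K'+1)) (by omega)
      simp only [← Nat.add_assoc] at hh
      rw [e1, e2] at hh
      simp at hh
  have hfin : (x + j) % NN n = (y + j) % NN n := by rw [hb, hb', hKK]
  exact Nat.ModEq.add_right_cancel' j hfin
private lemma ff_mod {n : ℕ} (m : ℕ) : ff n m = ff n (m % NN n) :=
  ff_congr ((Nat.mod_mod_of_dvd m dvd_rfl).symm)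

private lemma ff_pair {n : ℕ} (hn : 1 ≤ n) (m : ℕ) : ff n (2*m) = ff n (2*m+1) := by
  have h2n : 0 < 2*n := by omega
  have hNpos := NN_pos hn
  have hN2 : NN n = 2*(n*(n+1)) := by simp only [NN]; ring
  have hNn : 2*n*(n+1) = 2*n*n + 2*n := by ring
  have hN1 : 1 < NN n := by
    have : NN n = 2*n*(n+1) := rfl
    omega
  obtain ⟨z1, hzN, hzmod⟩ : ∃ z1, 2*z1 < NN n ∧ (2*m) % NN n = 2*z1 := by
    refine ⟨m % (n*(n+1)), ?_, ?_⟩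
    · rw [hN2]
      have := Nat.mod_lt m (show 0 < n*(n+1) by nlinarith)
      omega
    · rw [hN2, Nat.mul_mod_mul_left]
  obtain ⟨q, t, hqt, htlt⟩ : ∃ q t, 2*z1 = 2*n*q + t ∧ t < 2*n :=
    ⟨(2*z1) / (2*n), (2*z1) % (2*n), (Nat.div_add_mod _ (2*n)).symm, Nat.mod_lt _ h2n⟩
  have hnq : 2*n*q = 2*(n*q) := by ring
  have ht2 : t % 2 = 0 := by omega
  have hmod1 : (2*m+1) % NN n = 2*z1 + 1 := by
    rw [Nat.add_mod, hzmod, Nat.mod_eq_of_lt hN1]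
    exact Nat.mod_eq_of_lt (by omega)
  rw [ff_of_mod_eq hzmod hzN, ff_of_mod_eq hmod1 (by omega)]
  rw [hqt]
  rw [ff_eval hn q t htlt (by omega)]
  have hstep : 2*n*q + t + 1 = 2*n*q + (t+1) := by omega
  rw [hstep, ff_eval hn q (t+1) (by omega) (by omega)]
  simp only [decide_eq_decide]
  omega

private lemma pairs_flatten (g : ℕ → Bool) (M : ℕ) :
    ((List.range M).map (fun m => [g (2*m), g (2*m+1)])).flatten
      = (List.range (2*M)).map g := by
  induction M with
  | zero => simp
  | succ M ih =>
    rw [List.range_succ, show 2*(M+1) = 2*M + 1 + 1 by ring, List.range_succ,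
      List.range_succ]
    simp [ih]

private lemma prefix_rotate_eval {n : ℕ} (r : ℕ) (s : List Bool)
    (hp : s <+: ((List.range (NN n)).map (ff n)).rotate r) (j : ℕ) (hj : j < s.length) :
    s[j] = ff n ((j + r) % NN n) := by
  have hj2 : j < (((List.range (NN n)).map (ff n)).rotate r).length :=
    lt_of_lt_of_le hj hp.length_le
  have h1 : s[j] = (((List.range (NN n)).map (ff n)).rotate r)[j] := hp.getElem hj
  rw [List.getElem_rotate] at h1
  simpa using h1
/-- Words over the alphabet `{a, b}` are lists of `Bool`, with `false` standing for `a`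
and `true` for `b`. -/
theorem statement8 (ε : ℝ) (hε : 0 < ε) (L : ℕ) :
    ∃ w : List Bool,
      (∃ ws : List (List Bool),
        (∀ u ∈ ws, u = [false, false] ∨ u = [true, true]) ∧ w = ws.flatten) ∧
      L ≤ w.length ∧
      (¬ ∃ (u : List Bool) (k : ℕ), 2 ≤ k ∧ w = (List.replicate k u).flatten) ∧
      (∀ r₁ r₂ : ℕ, r₁ < r₂ → r₂ < w.length → ∀ s : List Bool,
        s <+: w.rotate r₁ → s <+: w.rotate r₂ → (s.length : ℝ) ≤ ε * w.length) := by
  obtain ⟨n, hn3, hnL, hnc⟩ : ∃ n : ℕ, 3 ≤ n ∧ L ≤ n ∧ ⌈(7:ℝ)/ε⌉₊ ≤ n :=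
    ⟨max 3 (max L ⌈(7:ℝ)/ε⌉₊), le_max_left _ _,
      le_trans (le_max_left _ _) (le_max_right _ _),
      le_trans (le_max_right _ _) (le_max_right _ _)⟩
  have hn : 1 ≤ n := by omega
  have hNpos : 0 < NN n := NN_pos hn
  have hNval : NN n = 2*n*(n+1) := rfl
  have hNn : 2*n*(n+1) = 2*n*n + 2*n := by ring
  have hnn : n ≤ 2*n*n := by nlinarith
  have h6N : 6*n < NN n := by rw [hNval]; nlinarith
  refine ⟨(List.range (NN n)).map (ff n), ?_, ?_, ?_, ?_⟩
  · -- concatenation of aa / bb blocks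
    refine ⟨(List.range (n*(n+1))).map
      (fun m => if ff n (2*m) then [true, true] else [false, false]), ?_, ?_⟩
    · intro u hu
      simp only [List.mem_map] at hu
      obtain ⟨m, _, rfl⟩ := hu
      by_cases hb : ff n (2*m) = true
      · right; rw [if_pos hb]
      · left; rw [if_neg hb]
    · have hfun : (fun m => if ff n (2*m) then [true, true] else [false, false])
          = fun m => [ff n (2*m), ff n (2*m+1)] := by
        funext m
        rw [← ff_pair hn m]
        by_cases hb : ff n (2*m) = true
        · rw [if_pos hb, hb]
        · rw [if_neg hb, Bool.not_eq_true] at *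
          rw [hb]
      rw [hfun, pairs_flatten (ff n) (n*(n+1)),
        show 2*(n*(n+1)) = NN n by simp only [NN]; ring]
  · -- length
    simp only [List.length_map, List.length_range]
    omega
  · -- not a proper power
    rintro ⟨u, k, hk, hw⟩
    have hlen : NN n = k * u.length := by
      have := congrArg List.length hw
      simpa using this
    have hu0 : 0 < u.length := by
      rcases Nat.eq_zero_or_pos u.length with h0 | h0
      · rw [h0, Nat.mul_zero] at hlen; omega
      · exact h0
    have huN : u.length < NN n := by
      have h2 : 2 * u.length ≤ k * u.length := Nat.mul_le_mul_right _ hk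
      omega
    -- rotation by u.length fixes w
    obtain ⟨k', rfl⟩ : ∃ k', k = k' + 1 := ⟨k - 1, by omega⟩
    have hsplit1 : (List.range (NN n)).map (ff n)
        = u ++ (List.replicate k' u).flatten := by
      rw [hw, List.replicate_succ, List.flatten_cons]
    have hsplit2 : (List.range (NN n)).map (ff n)
        = (List.replicate k' u).flatten ++ u := by
      rw [hw, List.replicate_succ', List.flatten_append]
      simp
    have ht : ((List.range (NN n)).map (ff n)).take u.length = u := by
      rw [hsplit1, List.take_left]
    have hd : ((List.range (NN n)).map (ff n)).drop u.length
        = (List.replicate k' u).flatten := by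
      rw [hsplit1, List.drop_left]
    have hrot : ((List.range (NN n)).map (ff n)).rotate u.length
        = (List.range (NN n)).map (ff n) := by
      rw [List.rotate_eq_drop_append_take (by
        simp only [List.length_map, List.length_range]; omega), ht, hd]
      exact hsplit2.symm
    -- hence ff n j = ff n (u.length + j) for all j ≤ 6n
    have hagree : ∀ j, j ≤ 6*n → ff n (0 + j) = ff n (u.length + j) := by
      intro j hj
      have hjN : j < NN n := by omega
      have h1 : (((List.range (NN n)).map (ff n)).rotate u.length)[j]'(by
              simpa using hjN)
          = ((List.range (NN n)).map (ff n))[j]'(by simpa using hjN) :=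
        List.getElem_of_eq hrot _
      rw [List.getElem_rotate] at h1
      simp only [List.length_map, List.length_range, List.getElem_map,
        List.getElem_range] at h1
      rw [Nat.zero_add, Nat.add_comm u.length j, ff_mod (n := n) (j + u.length)]
      exact h1.symm
    have := separation hn 0 u.length hagree
    rw [Nat.zero_mod, Nat.mod_eq_of_lt huN] at this
    omega
  · -- small common prefixes of distinct rotations
    intro r₁ r₂ h12 h2N s hp1 hp2
    have hwlen : ((List.range (NN n)).map (ff n)).length = NN n := by simp
    rw [hwlen] at h2N ⊢
    -- the key real bound
    have hceil : (7:ℝ)/ε ≤ (n:ℝ) := le_trans (Nat.le_ceil _) (by exact_mod_cast hnc)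
    have h7 : (7:ℝ) ≤ ε * n := by
      rw [div_le_iff₀ hε] at hceil
      linarith [hceil]
    have hbound : (6*n : ℝ) ≤ ε * (NN n : ℝ) := by
      have hcast : (NN n : ℝ) = 2*(n:ℝ)*((n:ℝ)+1) := by
        rw [hNval]; push_cast; ring
      rw [hcast]
      have hmul : (7:ℝ) * ((n:ℝ)+1) ≤ (ε * n) * ((n:ℝ)+1) :=
        mul_le_mul_of_nonneg_right h7 (by positivity)
      nlinarith [hmul, Nat.cast_nonneg (α := ℝ) n]
    rcases le_or_gt s.length (6*n) with hs | hs
    · calc (s.length : ℝ) ≤ (6*n : ℝ) := by exact_mod_cast hs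
        _ ≤ ε * (NN n : ℝ) := hbound
    · exfalso
      have hagree : ∀ j, j ≤ 6*n → ff n (r₁ + j) = ff n (r₂ + j) := by
        intro j hj
        have hjs : j < s.length := by omega
        have e1 := prefix_rotate_eval r₁ s hp1 j hjs
        have e2 := prefix_rotate_eval r₂ s hp2 j hjs
        rw [ff_mod (n := n) (r₁ + j), ff_mod (n := n) (r₂ + j),
          Nat.add_comm r₁ j, Nat.add_comm r₂ j, ← e1, ← e2]
      have := separation hn r₁ r₂ hagree
      rw [Nat.mod_eq_of_lt (by omega), Nat.mod_eq_of_lt h2N] at this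
      omega
end

section
/- For positive integers M, k and 1 ≤ i ≤ k, define the word u_{M,k,i} over the alphabet {a, b} as the concatenation u_{M,k,i} = ∏_{j=2M(i−1)+1}^{2Mi} a^j b^{2Mk+1−j}. Let M₁, k₁, M₂, k₂ be positive integers, 1 ≤ i₁ ≤ k₁, 1 ≤ i₂ ≤ k₂, and suppose u_{M₁,k₁,i₁} = p₁ ++ s ++ q₁ and u_{M₂,k₂,i₂} = p₂ ++ s ++ q₂ for some words p₁, q₁, p₂, q₂ and s. If either (M₁,k₁) = (M₂,k₂) and (i₁, |p₁|) ≠ (i₂, |p₂|), or M₁k₁ ≠ M₂k₂, then |s| ≤ 4M₁k₁ + 1. -/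
/-- The word `u_{M,k,i} = ∏_{j=2M(i−1)+1}^{2Mi} a^j b^{2Mk+1−j}` over the alphabet `{a, b}`,
encoded as a list of `Bool` with `false` standing for `a` and `true` for `b`. -/
def uWord (M k i : ℕ) : List Bool :=
  ((List.range (2 * M)).map fun t =>
    List.replicate (2 * M * (i - 1) + 1 + t) false ++
      List.replicate (2 * M * k + 1 - (2 * M * (i - 1) + 1 + t)) true).flatten

def Fb (c n x : ℕ) : Bool := decide (c + x / n ≤ x % n)

lemma Fb_eval (c n q o : ℕ) (ho : o < n) : Fb c n (q * n + o) = decide (c + q ≤ o) := by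
  unfold Fb
  rw [show q * n + o = o + n * q by ring]
  rw [Nat.add_mul_div_left _ _ (by omega : 0 < n), Nat.add_mul_mod_self_left,
    Nat.div_eq_of_lt ho, Nat.mod_eq_of_lt ho]
  simp

lemma rep_eq (j n : ℕ) (h : j ≤ n) :
    List.replicate j false ++ List.replicate (n - j) true
      = (List.range n).map fun o => decide (j ≤ o) := by
  apply List.ext_getElem
  · simp; omega
  · intro x h1 h2
    simp only [List.getElem_map, List.getElem_range, List.getElem_append,
      List.length_replicate, List.getElem_replicate]
    split <;> simp <;> omega

lemma flatten_eq (n : ℕ) (hn : 0 < n) (g : ℕ → ℕ) (L : ℕ) (hg : ∀ t < L, g t ≤ n) :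
    ((List.range L).map fun t =>
      List.replicate (g t) false ++ List.replicate (n - g t) true).flatten
      = (List.range (L * n)).map fun x => decide (g (x / n) ≤ x % n) := by
  induction L with
  | zero => simp
  | succ L ih =>
    rw [List.range_succ, List.map_append, List.flatten_append,
      ih (fun t ht => hg t (by omega)),
      show (L+1) * n = L * n + n by ring, List.range_add, List.map_append]
    congr 1
    simp only [List.map_singleton, List.flatten_cons, List.flatten_nil, List.append_nil,
      List.map_map]
    rw [rep_eq (g L) n (hg L (by omega))]
    apply List.map_congr_left
    intro o ho
    rw [List.mem_range] at ho
    simp only [Function.comp]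
    have hd : (L * n + o) / n = L := by
      rw [show L * n + o = o + n * L by ring, Nat.add_mul_div_left _ _ hn,
        Nat.div_eq_of_lt ho]; omega
    have hm : (L * n + o) % n = o := by
      rw [show L * n + o = o + n * L by ring, Nat.add_mul_mod_self_left,
        Nat.mod_eq_of_lt ho]
    rw [hd, hm]

lemma uWord_eq (M k i' : ℕ) (hM : 0 < M) (hik : i' + 1 ≤ k) :
    uWord M k (i' + 1)
      = (List.range (2 * M * (2 * M * k + 1))).map (Fb (2 * M * i' + 1) (2 * M * k + 1)) := by
  unfold uWord
  simp only [Nat.add_sub_cancel]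
  have hg : ∀ t < 2 * M, 2 * M * i' + 1 + t ≤ 2 * M * k + 1 := by
    intro t ht
    have h2 : 2 * M * (i' + 1) ≤ 2 * M * k := Nat.mul_le_mul_left _ hik
    have h3 : 2 * M * (i' + 1) = 2 * M * i' + 2 * M := by ring
    omega
  rw [flatten_eq (2 * M * k + 1) (by omega) (fun t => 2 * M * i' + 1 + t) (2 * M) hg,
    show 2 * M * (2 * M * k + 1) = (2 * M) * (2 * M * k + 1) by ring]
  apply List.map_congr_left
  intro x _
  unfold Fb
  norm_num [Nat.add_assoc]

lemma div_decomp (x n : ℕ) (hn : 0 < n) : ∃ q r, r < n ∧ x = q * n + r :=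
  ⟨x / n, x % n, Nat.mod_lt _ hn, by rw [Nat.div_add_mod']⟩

lemma recogA (L n c x ℓ m : ℕ) (hc1 : 0 < c) (hc : ∀ t < L, c + t < n)
    (hℓ : 0 < ℓ) (hm : 0 < m) (hx : 0 < x) (hend : x + ℓ + m < L * n)
    (hprev : Fb c n (x - 1) = true)
    (hfalse : ∀ o < ℓ, Fb c n (x + o) = false)
    (htrue : ∀ o < m, Fb c n (x + ℓ + o) = true)
    (hnext : Fb c n (x + ℓ + m) = false) :
    ∃ t, t < L ∧ x = t * n ∧ ℓ = c + t ∧ ℓ + m = n := by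
  have hL : 0 < L := by
    rcases Nat.eq_zero_or_pos L with h | h
    · subst h; simp at hend
    · exact h
  have hn : 0 < n := by have := hc 0 hL; omega
  obtain ⟨q, r, hr, hqr⟩ := div_decomp x n hn
  have e1 : (q + 1) * n = q * n + n := by ring
  have hqL : q < L := by
    have h1 : q * n < L * n := by omega
    exact Nat.lt_of_mul_lt_mul_right h1
  have hcqn := hc q hqL
  have hr0 : r = 0 := by
    by_contra hrne
    have h1 := hfalse 0 hℓ
    rw [show x + 0 = q * n + r by omega, Fb_eval c n q r hr] at h1
    have h2 := hprev
    rw [show x - 1 = q * n + (r - 1) by omega, Fb_eval c n q (r-1) (by omega)] at h2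
    simp only [decide_eq_false_iff_not, decide_eq_true_eq, Nat.not_le] at h1 h2
    omega
  have hℓn : ℓ < n := by
    by_contra hln
    have h1 := hfalse (n - 1) (by omega)
    rw [show x + (n - 1) = q * n + (n - 1) by omega, Fb_eval c n q (n-1) (by omega)] at h1
    simp only [decide_eq_false_iff_not, Nat.not_le] at h1
    omega
  have hℓeq : ℓ = c + q := by
    have h1 := htrue 0 hm
    rw [show x + ℓ + 0 = q * n + ℓ by omega, Fb_eval c n q ℓ hℓn] at h1
    have h2 := hfalse (ℓ - 1) (by omega)
    rw [show x + (ℓ - 1) = q * n + (ℓ - 1) by omega, Fb_eval c n q (ℓ-1) (by omega)] at h2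
    simp only [decide_eq_false_iff_not, decide_eq_true_eq, Nat.not_le] at h1 h2
    omega
  have hsum_le : ℓ + m ≤ n := by
    by_contra hgt
    have h1 := htrue (n - ℓ) (by omega)
    rw [show x + ℓ + (n - ℓ) = (q + 1) * n + 0 by omega, Fb_eval c n (q+1) 0 hn] at h1
    simp only [decide_eq_true_eq] at h1
    omega
  have hsum : ℓ + m = n := by
    by_contra hne
    have h1 := hnext
    rw [show x + ℓ + m = q * n + (ℓ + m) by omega, Fb_eval c n q (ℓ+m) (by omega)] at h1
    simp only [decide_eq_false_iff_not, Nat.not_le] at h1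
    omega
  exact ⟨q, hqL, by omega, hℓeq, hsum⟩

lemma recogB (L n c y ℓ m : ℕ) (hc1 : 0 < c) (hc : ∀ t < L, c + t < n)
    (hℓ : 0 < ℓ) (hm : 0 < m) (hend : y + 1 + m + ℓ < L * n)
    (hy : Fb c n y = false)
    (htrue : ∀ o < m, Fb c n (y + 1 + o) = true)
    (hfalse : ∀ o < ℓ, Fb c n (y + 1 + m + o) = false)
    (hlast : Fb c n (y + 1 + m + ℓ) = true) :
    ∃ t, t < L ∧ y + 1 + m = t * n ∧ ℓ = c + t ∧ ℓ + m = n + 1 := by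
  have hL : 0 < L := by
    rcases Nat.eq_zero_or_pos L with h | h
    · subst h; simp at hend
    · exact h
  have hn : 0 < n := by have := hc 0 hL; omega
  obtain ⟨q, r, hr, hqr⟩ := div_decomp (y + 1 + m) n hn
  have hr0 : r = 0 := by
    by_contra hrne
    have h1 := hfalse 0 hℓ
    rw [show y + 1 + m + 0 = q * n + r by omega, Fb_eval c n q r hr] at h1
    have h2 := htrue (m - 1) (by omega)
    rw [show y + 1 + (m - 1) = q * n + (r - 1) by omega, Fb_eval c n q (r-1) (by omega)] at h2
    simp only [decide_eq_false_iff_not, decide_eq_true_eq, Nat.not_le] at h1 h2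
    omega
  have hq1 : 1 ≤ q := by
    rcases Nat.eq_zero_or_pos q with h | h
    · subst h; simp at hqr; omega
    · exact h
  obtain ⟨q', rfl⟩ : ∃ q', q = q' + 1 := ⟨q - 1, by omega⟩
  have e1 : (q' + 1) * n = q' * n + n := by ring
  have hqL : q' + 1 < L := by
    have h1 : (q' + 1) * n < L * n := by omega
    exact Nat.lt_of_mul_lt_mul_right h1
  have hcqn := hc (q' + 1) hqL
  have hcq'n := hc q' (by omega)
  have hℓn : ℓ < n := by
    by_contra hln
    have h1 := hfalse (n - 1) (by omega)
    rw [show y + 1 + m + (n - 1) = (q' + 1) * n + (n - 1) by omega,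
      Fb_eval c n (q'+1) (n-1) (by omega)] at h1
    simp only [decide_eq_false_iff_not, Nat.not_le] at h1
    omega
  have hℓeq : ℓ = c + (q' + 1) := by
    have h1 := hlast
    rw [show y + 1 + m + ℓ = (q' + 1) * n + ℓ by omega, Fb_eval c n (q'+1) ℓ hℓn] at h1
    have h2 := hfalse (ℓ - 1) (by omega)
    rw [show y + 1 + m + (ℓ - 1) = (q' + 1) * n + (ℓ - 1) by omega,
      Fb_eval c n (q'+1) (ℓ-1) (by omega)] at h2
    simp only [decide_eq_false_iff_not, decide_eq_true_eq, Nat.not_le] at h1 h2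
    omega
  have hmn : m < n := by
    by_contra hmn
    have h1 := htrue (m - n) (by omega)
    rw [show y + 1 + (m - n) = q' * n + 0 by omega, Fb_eval c n q' 0 hn] at h1
    simp only [decide_eq_true_eq] at h1
    omega
  have hmeq : ℓ + m = n + 1 := by
    have h1 := htrue 0 hm
    rw [show y + 1 + 0 = q' * n + (n - m) by omega,
      Fb_eval c n q' (n-m) (by omega)] at h1
    have h2 := hy
    rw [show y = q' * n + (n - m - 1) by omega,
      Fb_eval c n q' (n-m-1) (by omega)] at h2
    simp only [decide_eq_false_iff_not, decide_eq_true_eq, Nat.not_le] at h1 h2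
    omega
  exact ⟨q' + 1, hqL, by omega, hℓeq, hmeq⟩

lemma exists_pattern (L n c a σ : ℕ) (hc1 : 0 < c) (hn : 2 ≤ n)
    (hc : ∀ t < L, c + t < n) (hσ : 2 * n ≤ σ) (ha : a + σ ≤ L * n) :
    ∃ y ℓ m, 0 < ℓ ∧ 0 < m ∧ a ≤ y ∧ y + ℓ + m + 2 ≤ a + σ ∧
      ((Fb c n y = true ∧ (∀ o < ℓ, Fb c n (y + 1 + o) = false) ∧
        (∀ o < m, Fb c n (y + 1 + ℓ + o) = true) ∧ Fb c n (y + 1 + ℓ + m) = false) ∨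
       (Fb c n y = false ∧ (∀ o < m, Fb c n (y + 1 + o) = true) ∧
        (∀ o < ℓ, Fb c n (y + 1 + m + o) = false) ∧ Fb c n (y + 1 + m + ℓ) = true)) := by
  obtain ⟨q, r, hr, hqr⟩ := div_decomp a n (by omega)
  have e1 : (q + 1) * n = q * n + n := by ring
  have e2 : (q + 2) * n = q * n + 2 * n := by ring
  have hq2 : q + 2 ≤ L := by
    have h1 : (q + 2) * n ≤ L * n := by omega
    exact Nat.le_of_mul_le_mul_right h1 (by omega)
  have hcq : c + q < n := hc q (by omega)
  have hcq1 : c + (q + 1) < n := hc (q + 1) (by omega)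
  rcases Nat.eq_zero_or_pos r with hr0 | hrpos
  · -- a = q*n : pattern B
    refine ⟨q * n + (c + q - 1), c + q + 1, n - (c + q), by omega, by omega, by omega,
      by omega, Or.inr ⟨?_, ?_, ?_, ?_⟩⟩
    · rw [show q * n + (c + q - 1) = q * n + (c + q - 1) from rfl,
        Fb_eval c n q (c + q - 1) (by omega)]
      simp only [decide_eq_false_iff_not, Nat.not_le]; omega
    · intro o ho
      rw [show q * n + (c + q - 1) + 1 + o = q * n + (c + q + o) by omega,
        Fb_eval c n q (c + q + o) (by omega)]
      simp only [decide_eq_true_eq]; omega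
    · intro o ho
      rw [show q * n + (c + q - 1) + 1 + (n - (c + q)) + o = (q + 1) * n + o by omega,
        Fb_eval c n (q+1) o (by omega)]
      simp only [decide_eq_false_iff_not, Nat.not_le]; omega
    · rw [show q * n + (c + q - 1) + 1 + (n - (c + q)) + (c + q + 1)
          = (q + 1) * n + (c + q + 1) by omega,
        Fb_eval c n (q+1) (c + q + 1) (by omega)]
      simp only [decide_eq_true_eq]; omega
  · -- pattern A at block boundary (q+1)*n
    refine ⟨(q + 1) * n - 1, c + (q + 1), n - (c + (q + 1)), by omega, by omega, by omega,
      by omega, Or.inl ⟨?_, ?_, ?_, ?_⟩⟩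
    · rw [show (q + 1) * n - 1 = q * n + (n - 1) by omega,
        Fb_eval c n q (n-1) (by omega)]
      simp only [decide_eq_true_eq]; omega
    · intro o ho
      rw [show (q + 1) * n - 1 + 1 + o = (q + 1) * n + o by omega,
        Fb_eval c n (q+1) o (by omega)]
      simp only [decide_eq_false_iff_not, Nat.not_le]; omega
    · intro o ho
      rw [show (q + 1) * n - 1 + 1 + (c + (q + 1)) + o = (q + 1) * n + (c + (q + 1) + o) by omega,
        Fb_eval c n (q+1) (c + (q + 1) + o) (by omega)]
      simp only [decide_eq_true_eq]; omega
    · rw [show (q + 1) * n - 1 + 1 + (c + (q + 1)) + (n - (c + (q + 1)))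
          = (q + 2) * n + 0 by omega,
        Fb_eval c n (q+2) 0 (by omega)]
      simp only [decide_eq_true_eq, decide_eq_false_iff_not, Nat.not_le]; omega

lemma final_case (M k i₁' i₂' t₁ t₂ a₁ a₂ d : ℕ) (hM : 0 < M)
    (ht₁ : t₁ < 2 * M) (ht₂ : t₂ < 2 * M)
    (hl : 2 * M * i₁' + 1 + t₁ = 2 * M * i₂' + 1 + t₂)
    (hX₁ : a₁ + d = t₁ * (2 * M * k + 1)) (hX₂ : a₂ + d = t₂ * (2 * M * k + 1)) :
    i₁' + 1 = i₂' + 1 ∧ a₁ = a₂ := by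
  have ha : 2 * M * i₁' + t₁ = 2 * M * i₂' + t₂ := by omega
  have hmod : t₁ = t₂ := by
    have h1 := congrArg (· % (2 * M)) ha
    simp only [Nat.mul_add_mod] at h1
    rwa [Nat.mod_eq_of_lt ht₁, Nat.mod_eq_of_lt ht₂] at h1
  subst hmod
  have hteq2 : 2 * M * i₁' = 2 * M * i₂' := by omega
  have hi : i₁' = i₂' := Nat.eq_of_mul_eq_mul_left (by omega) hteq2
  exact ⟨by omega, by omega⟩

theorem statement9 (M₁ k₁ M₂ k₂ i₁ i₂ : ℕ)
    (hM₁ : 0 < M₁) (hk₁ : 0 < k₁) (hM₂ : 0 < M₂) (hk₂ : 0 < k₂)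
    (hi₁ : 1 ≤ i₁) (hi₁k : i₁ ≤ k₁) (hi₂ : 1 ≤ i₂) (hi₂k : i₂ ≤ k₂)
    (s p₁ q₁ p₂ q₂ : List Bool)
    (h₁ : uWord M₁ k₁ i₁ = p₁ ++ s ++ q₁)
    (h₂ : uWord M₂ k₂ i₂ = p₂ ++ s ++ q₂)
    (hcase : ((M₁, k₁) = (M₂, k₂) ∧ (i₁, p₁.length) ≠ (i₂, p₂.length)) ∨
      M₁ * k₁ ≠ M₂ * k₂) :
    s.length ≤ 4 * M₁ * k₁ + 1 := by
  by_contra hcon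
  push_neg at hcon
  obtain ⟨i₁', rfl⟩ : ∃ j, i₁ = j + 1 := ⟨i₁ - 1, by omega⟩
  obtain ⟨i₂', rfl⟩ : ∃ j, i₂ = j + 1 := ⟨i₂ - 1, by omega⟩
  have hu₁ := uWord_eq M₁ k₁ i₁' hM₁ hi₁k
  have hu₂ := uWord_eq M₂ k₂ i₂' hM₂ hi₂k
  have hr₁ : 2 * M₁ * k₁ = 2 * (M₁ * k₁) := by ring
  have hr₂ : 2 * M₂ * k₂ = 2 * (M₂ * k₂) := by ring
  have hr₁' : 4 * M₁ * k₁ = 4 * (M₁ * k₁) := by ring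
  have hMk₁ : 1 ≤ M₁ * k₁ := Nat.mul_pos hM₁ hk₁
  have hMk₂ : 1 ≤ M₂ * k₂ := Nat.mul_pos hM₂ hk₂
  have hl₁ : p₁.length + s.length + q₁.length = 2 * M₁ * (2 * M₁ * k₁ + 1) := by
    have h := congrArg List.length h₁
    rw [hu₁] at h
    simp at h
    omega
  have hl₂ : p₂.length + s.length + q₂.length = 2 * M₂ * (2 * M₂ * k₂ + 1) := by
    have h := congrArg List.length h₂
    rw [hu₂] at h
    simp at h
    omega
  have hcb₁ : ∀ t < 2 * M₁, 2 * M₁ * i₁' + 1 + t < 2 * M₁ * k₁ + 1 := by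
    intro t ht
    have h2 : 2 * M₁ * (i₁' + 1) ≤ 2 * M₁ * k₁ := Nat.mul_le_mul_left _ hi₁k
    have h3 : 2 * M₁ * (i₁' + 1) = 2 * M₁ * i₁' + 2 * M₁ := by ring
    omega
  have hcb₂ : ∀ t < 2 * M₂, 2 * M₂ * i₂' + 1 + t < 2 * M₂ * k₂ + 1 := by
    intro t ht
    have h2 : 2 * M₂ * (i₂' + 1) ≤ 2 * M₂ * k₂ := Nat.mul_le_mul_left _ hi₂k
    have h3 : 2 * M₂ * (i₂' + 1) = 2 * M₂ * i₂' + 2 * M₂ := by ring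
    omega
  have hσ : 2 * (2 * M₁ * k₁ + 1) ≤ s.length := by
    have e : 2 * (2 * M₁ * k₁ + 1) = 4 * M₁ * k₁ + 2 := by ring
    omega
  have hkey : ∀ d, d < s.length →
      Fb (2 * M₁ * i₁' + 1) (2 * M₁ * k₁ + 1) (p₁.length + d)
        = Fb (2 * M₂ * i₂' + 1) (2 * M₂ * k₂ + 1) (p₂.length + d) := by
    intro d hd
    have A₁ : (uWord M₁ k₁ (i₁' + 1))[p₁.length + d]?
        = some (Fb (2 * M₁ * i₁' + 1) (2 * M₁ * k₁ + 1) (p₁.length + d)) := by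
      rw [hu₁, List.getElem?_map, List.getElem?_range (by omega)]
      rfl
    have B₁ : (uWord M₁ k₁ (i₁' + 1))[p₁.length + d]? = s[d]? := by
      rw [h₁, List.append_assoc, List.getElem?_append_right (by omega : p₁.length ≤ p₁.length + d),
        show p₁.length + d - p₁.length = d by omega, List.getElem?_append_left hd]
    have A₂ : (uWord M₂ k₂ (i₂' + 1))[p₂.length + d]?
        = some (Fb (2 * M₂ * i₂' + 1) (2 * M₂ * k₂ + 1) (p₂.length + d)) := by
      rw [hu₂, List.getElem?_map, List.getElem?_range (by omega)]
      rfl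
    have B₂ : (uWord M₂ k₂ (i₂' + 1))[p₂.length + d]? = s[d]? := by
      rw [h₂, List.append_assoc, List.getElem?_append_right (by omega : p₂.length ≤ p₂.length + d),
        show p₂.length + d - p₂.length = d by omega, List.getElem?_append_left hd]
    have h := (A₁.symm.trans B₁).trans ((A₂.symm.trans B₂).symm)
    exact Option.some.inj h
  have trans : ∀ z, p₁.length ≤ z → z < p₁.length + s.length →
      Fb (2 * M₂ * i₂' + 1) (2 * M₂ * k₂ + 1) (z - p₁.length + p₂.length)
        = Fb (2 * M₁ * i₁' + 1) (2 * M₁ * k₁ + 1) z := by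
    intro z hz1 hz2
    have h := hkey (z - p₁.length) (by omega)
    rw [show p₁.length + (z - p₁.length) = z by omega] at h
    rw [show z - p₁.length + p₂.length = p₂.length + (z - p₁.length) by omega]
    exact h.symm
  obtain ⟨y, ℓ, m, hℓ, hm, hya, hyb, hpat⟩ :=
    exists_pattern (2 * M₁) (2 * M₁ * k₁ + 1) (2 * M₁ * i₁' + 1) p₁.length s.length
      (by omega) (by omega) hcb₁ hσ (by omega)
  rcases hpat with ⟨hA1, hA2, hA3, hA4⟩ | ⟨hB1, hB2, hB3, hB4⟩
  · -- pattern A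
    obtain ⟨t₁, ht₁, hx₁, hlt₁, hsum₁⟩ :=
      recogA (2 * M₁) (2 * M₁ * k₁ + 1) (2 * M₁ * i₁' + 1) (y + 1) ℓ m (by omega) hcb₁
        hℓ hm (by omega) (by omega) (by simpa using hA1) hA2 hA3 hA4
    have hB1' : Fb (2 * M₂ * i₂' + 1) (2 * M₂ * k₂ + 1) (y - p₁.length + p₂.length) = true :=
      (trans y hya (by omega)).trans hA1
    have hB2' : ∀ o < ℓ,
        Fb (2 * M₂ * i₂' + 1) (2 * M₂ * k₂ + 1) (y - p₁.length + p₂.length + 1 + o) = false := by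
      intro o ho
      have h := (trans (y + 1 + o) (by omega) (by omega)).trans (hA2 o ho)
      rwa [show y + 1 + o - p₁.length + p₂.length = y - p₁.length + p₂.length + 1 + o
        by omega] at h
    have hB3' : ∀ o < m,
        Fb (2 * M₂ * i₂' + 1) (2 * M₂ * k₂ + 1)
          (y - p₁.length + p₂.length + 1 + ℓ + o) = true := by
      intro o ho
      have h := (trans (y + 1 + ℓ + o) (by omega) (by omega)).trans (hA3 o ho)
      rwa [show y + 1 + ℓ + o - p₁.length + p₂.length = y - p₁.length + p₂.length + 1 + ℓ + o
        by omega] at h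
    have hB4' : Fb (2 * M₂ * i₂' + 1) (2 * M₂ * k₂ + 1)
        (y - p₁.length + p₂.length + 1 + ℓ + m) = false := by
      have h := (trans (y + 1 + ℓ + m) (by omega) (by omega)).trans hA4
      rwa [show y + 1 + ℓ + m - p₁.length + p₂.length = y - p₁.length + p₂.length + 1 + ℓ + m
        by omega] at h
    obtain ⟨t₂, ht₂, hx₂, hlt₂, hsum₂⟩ :=
      recogA (2 * M₂) (2 * M₂ * k₂ + 1) (2 * M₂ * i₂' + 1) (y - p₁.length + p₂.length + 1) ℓ m
        (by omega) hcb₂ hℓ hm (by omega) (by omega) (by simpa using hB1') hB2' hB3' hB4'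
    have hMkeq : M₁ * k₁ = M₂ * k₂ := by omega
    rcases hcase with ⟨hMK, hne⟩ | hne2
    · simp only [Prod.mk.injEq] at hMK
      obtain ⟨hMe, hKe⟩ := hMK
      subst hMe; subst hKe
      obtain ⟨hieq, haeq⟩ := final_case M₁ k₁ i₁' i₂' t₁ t₂ p₁.length p₂.length
        (y + 1 - p₁.length) hM₁ ht₁ ht₂ (by omega) (by omega) (by omega)
      exact hne (by rw [hieq, haeq])
    · exact hne2 hMkeq
  · -- pattern B
    obtain ⟨t₁, ht₁, hx₁, hlt₁, hsum₁⟩ :=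
      recogB (2 * M₁) (2 * M₁ * k₁ + 1) (2 * M₁ * i₁' + 1) y ℓ m (by omega) hcb₁
        hℓ hm (by omega) hB1 hB2 hB3 hB4
    have hB1' : Fb (2 * M₂ * i₂' + 1) (2 * M₂ * k₂ + 1) (y - p₁.length + p₂.length) = false :=
      (trans y hya (by omega)).trans hB1
    have hB2' : ∀ o < m,
        Fb (2 * M₂ * i₂' + 1) (2 * M₂ * k₂ + 1) (y - p₁.length + p₂.length + 1 + o) = true := by
      intro o ho
      have h := (trans (y + 1 + o) (by omega) (by omega)).trans (hB2 o ho)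
      rwa [show y + 1 + o - p₁.length + p₂.length = y - p₁.length + p₂.length + 1 + o
        by omega] at h
    have hB3' : ∀ o < ℓ,
        Fb (2 * M₂ * i₂' + 1) (2 * M₂ * k₂ + 1)
          (y - p₁.length + p₂.length + 1 + m + o) = false := by
      intro o ho
      have h := (trans (y + 1 + m + o) (by omega) (by omega)).trans (hB3 o ho)
      rwa [show y + 1 + m + o - p₁.length + p₂.length = y - p₁.length + p₂.length + 1 + m + o
        by omega] at h
    have hB4' : Fb (2 * M₂ * i₂' + 1) (2 * M₂ * k₂ + 1)
        (y - p₁.length + p₂.length + 1 + m + ℓ) = true := by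
      have h := (trans (y + 1 + m + ℓ) (by omega) (by omega)).trans hB4
      rwa [show y + 1 + m + ℓ - p₁.length + p₂.length = y - p₁.length + p₂.length + 1 + m + ℓ
        by omega] at h
    obtain ⟨t₂, ht₂, hx₂, hlt₂, hsum₂⟩ :=
      recogB (2 * M₂) (2 * M₂ * k₂ + 1) (2 * M₂ * i₂' + 1) (y - p₁.length + p₂.length) ℓ m
        (by omega) hcb₂ hℓ hm (by omega) hB1' hB2' hB3' hB4'
    have hMkeq : M₁ * k₁ = M₂ * k₂ := by omega
    rcases hcase with ⟨hMK, hne⟩ | hne2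
    · simp only [Prod.mk.injEq] at hMK
      obtain ⟨hMe, hKe⟩ := hMK
      subst hMe; subst hKe
      obtain ⟨hieq, haeq⟩ := final_case M₁ k₁ i₁' i₂' t₁ t₂ p₁.length p₂.length
        (y + 1 + m - p₁.length) hM₁ ht₁ ht₂ (by omega) (by omega) (by omega)
      exact hne (by rw [hieq, haeq])
    · exact hne2 hMkeq
end

section
/- For positive integers M, k and 1 ≤ i ≤ k, define the word u_{M,k,i} over the alphabet {a, b} as the concatenation u_{M,k,i} = ∏_{j=2M(i−1)+1}^{2Mi} a^j b^{2Mk+1−j}. If a word s is a factor of u_{M,k,i} and is also a factor of some concatenation of copies of the words aa and bb, then |s| ≤ 4Mk + 4. -/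
namespace Statement10Aux

/-- One block of `uWord`. -/
def blk (M k i t : ℕ) : List Bool :=
  List.replicate (2 * M * (i - 1) + 1 + t) false ++
    List.replicate (2 * M * k + 1 - (2 * M * (i - 1) + 1 + t)) true

lemma uWord_eq (M k i : ℕ) :
    uWord M k i = ((List.range (2 * M)).map (blk M k i)).flatten := rfl

lemma j_le (M k i t : ℕ) (hi : 1 ≤ i) (hik : i ≤ k) (ht : t < 2 * M) :
    2 * M * (i - 1) + 1 + t ≤ 2 * M * k := by
  have h1 : 2 * M * (i - 1) + 2 * M = 2 * M * i := by
    rw [← Nat.mul_succ]; congr 1; omega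
  have h2 : 2 * M * i ≤ 2 * M * k := Nat.mul_le_mul_left _ hik
  omega

lemma blk_length (M k i t : ℕ) (hi : 1 ≤ i) (hik : i ≤ k) (ht : t < 2 * M) :
    (blk M k i t).length = 2 * M * k + 1 := by
  have := j_le M k i t hi hik ht
  simp [blk]; omega

lemma flatten_prefix_length (M k i c : ℕ) (hi : 1 ≤ i) (hik : i ≤ k) (hc : c ≤ 2 * M) :
    (((List.range c).map (blk M k i)).flatten).length = c * (2 * M * k + 1) := by
  rw [List.length_flatten, List.map_map]
  have : List.map (List.length ∘ blk M k i) (List.range c)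
      = List.map (fun _ => 2 * M * k + 1) (List.range c) := by
    apply List.map_congr_left
    intro t ht
    simp only [List.mem_range] at ht
    exact blk_length M k i t hi hik (by omega)
  rw [this, List.map_const', List.sum_replicate, smul_eq_mul, List.length_range]

lemma uWord_drop (M k i c : ℕ) (hi : 1 ≤ i) (hik : i ≤ k) (hc : c < 2 * M) :
    ∃ tail, (uWord M k i).drop (c * (2 * M * k + 1)) = blk M k i c ++ tail := by
  rw [uWord_eq]
  rw [show List.range (2 * M) = List.range c ++ (List.range (2 * M - c)).map (c + ·) from by
    rw [← List.range_add]; congr 1; omega]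
  rw [List.map_append, List.flatten_append]
  rw [List.drop_append_of_le_length
    (le_of_eq (flatten_prefix_length M k i c hi hik (by omega)).symm)]
  rw [List.drop_eq_nil_of_le
    (le_of_eq (flatten_prefix_length M k i c hi hik (by omega))), List.nil_append]
  have h1 : 2 * M - c = (2 * M - c - 1) + 1 := by omega
  rw [h1, List.range_succ_eq_map]
  refine ⟨(((List.range (2*M - c - 1)).map Nat.succ).map ((c + ·) : ℕ → ℕ)).map
    (blk M k i) |>.flatten, ?_⟩
  simp [List.flatten_cons]

lemma uWord_getElem (M k i c r : ℕ) (hi : 1 ≤ i) (hik : i ≤ k) (hc : c < 2 * M)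
    (hr : r < 2 * M * k + 1) :
    (uWord M k i)[c * (2 * M * k + 1) + r]? = (blk M k i c)[r]? := by
  obtain ⟨tail, hd⟩ := uWord_drop M k i c hi hik hc
  rw [← List.getElem?_drop, hd, List.getElem?_append]
  rw [blk_length M k i c hi hik hc]
  simp [hr]

/-- The letter just before a block boundary is `true`. -/
lemma uWord_true (M k i c : ℕ) (hi : 1 ≤ i) (hik : i ≤ k) (hc : c < 2 * M) :
    (uWord M k i)[c * (2 * M * k + 1) + (2 * M * k)]? = some true := by
  rw [uWord_getElem M k i c (2 * M * k) hi hik hc (by omega)]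
  have hj := j_le M k i c hi hik hc
  rw [blk, List.getElem?_append_right (by simp; omega), List.length_replicate,
    List.getElem?_replicate, if_pos (by omega)]

/-- The letter at the start of a block is `false`. -/
lemma uWord_false (M k i c : ℕ) (hi : 1 ≤ i) (hik : i ≤ k) (hc : c < 2 * M) :
    (uWord M k i)[c * (2 * M * k + 1)]? = some false := by
  have h := uWord_getElem M k i c 0 hi hik hc (by omega)
  rw [Nat.add_zero] at h
  rw [h, blk, List.getElem?_append, List.getElem?_replicate]
  simp

lemma uWord_length (M k i : ℕ) (hi : 1 ≤ i) (hik : i ≤ k) :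
    (uWord M k i).length = 2 * M * (2 * M * k + 1) := by
  have := flatten_prefix_length M k i (2 * M) hi hik le_rfl
  rw [uWord_eq]
  exact this

/-- In a flattening of doubled letters, even positions equal their successors. -/
lemma pair_flatten (ws : List (List Bool))
    (h : ∀ u ∈ ws, u = [false, false] ∨ u = [true, true]) (m : ℕ) :
    ws.flatten[2 * m]? = ws.flatten[2 * m + 1]? ∨ ws.flatten[2 * m + 1]? = none := by
  induction ws generalizing m with
  | nil => right; simp
  | cons u rest ih =>
    have hu := h u (by simp)
    have hrest : ∀ v ∈ rest, v = [false, false] ∨ v = [true, true] :=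
      fun v hv => h v (by simp [hv])
    rcases hu with hu | hu <;> subst hu <;>
    · cases m with
      | zero => left; simp
      | succ m =>
        have h2 : 2 * (m + 1) = (2 * m) + 1 + 1 := by ring
        have h3 : 2 * (m + 1) + 1 = (2 * m + 1) + 1 + 1 := by ring
        rw [h3, h2]
        simpa using ih hrest m

/-- A position where neighbouring letters differ, inside a flattening of doubled letters,
is odd. -/
lemma ne_pos_odd (ws : List (List Bool))
    (h : ∀ u ∈ ws, u = [false, false] ∨ u = [true, true]) (j : ℕ) (b1 b2 : Bool)
    (h1 : ws.flatten[j]? = some b1) (h2 : ws.flatten[j + 1]? = some b2) (hne : b1 ≠ b2) :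
    j % 2 = 1 := by
  by_contra hodd
  have hj : j = 2 * (j / 2) := by omega
  rcases pair_flatten ws h (j / 2) with he | he
  · rw [← hj] at he
    rw [h1, h2] at he
    exact hne (Option.some_injective _ he)
  · rw [← hj, h2] at he
    exact Option.some_ne_none _ he

lemma factor_getElem {α} (u p s q : List α) (h : u = p ++ s ++ q) (m : ℕ)
    (hm : m < s.length) : u[p.length + m]? = s[m]? := by
  subst h
  rw [List.append_assoc, List.getElem?_append_right (by omega), Nat.add_sub_cancel_left,
    List.getElem?_append]
  simp [hm]

end Statement10Aux

theorem statement10 (M k i : ℕ)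
    (hM : 0 < M) (hk : 0 < k) (hi : 1 ≤ i) (hik : i ≤ k)
    (s : List Bool)
    (hfac : ∃ p q : List Bool, uWord M k i = p ++ s ++ q)
    (hfac' : ∃ (ws : List (List Bool)) (p q : List Bool),
      (∀ u ∈ ws, u = [false, false] ∨ u = [true, true]) ∧ ws.flatten = p ++ s ++ q) :
    s.length ≤ 4 * M * k + 4 := by
  classical
  open Statement10Aux in
  by_contra hlen
  push_neg at hlen
  obtain ⟨p, q, hu⟩ := hfac
  obtain ⟨ws, pw, qw, hws, hflat⟩ := hfac'
  set L : ℕ := 2 * M * k + 1 with hL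
  set pl : ℕ := p.length with hpl
  set t : ℕ := pl / L with ht
  -- basic size facts
  have hLpos : 0 < L := by omega
  have hulen : (uWord M k i).length = 2 * M * L := Statement10Aux.uWord_length M k i hi hik
  have htot : pl + s.length + q.length = 2 * M * L := by
    have := congrArg List.length hu
    simp at this
    omega
  have hdiv1 : t * L ≤ pl := Nat.div_mul_le_self pl L
  have hdiv2 : pl < t * L + L := Nat.lt_div_mul_add hLpos
  -- s is long: s.length ≥ 2L + 3
  have hslen : 2 * L + 3 ≤ s.length := by
    have : L = 2 * (M * k) + 1 := by ring
    have h4 : 4 * M * k = 4 * (M * k) := by ring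
    omega
  -- the two boundary positions
  have hx1 : (t + 1) * L = t * L + L := by ring
  have hy1 : (t + 2) * L = t * L + 2 * L := by ring
  -- t + 2 < 2 * M
  have ht2 : t + 2 < 2 * M := by
    by_contra hcon
    push_neg at hcon
    have : 2 * M * L ≤ (t + 2) * L := Nat.mul_le_mul_right _ hcon
    omega
  -- boundary letters in uWord
  have hbt1 : (uWord M k i)[(t + 1) * L - 1]? = some true := by
    have := Statement10Aux.uWord_true M k i t hi hik (by omega)
    have he : t * L + 2 * M * k = (t + 1) * L - 1 := by
      have : L = 2 * M * k + 1 := hL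
      omega
    rwa [he] at this
  have hbf1 : (uWord M k i)[(t + 1) * L]? = some false := by
    have := Statement10Aux.uWord_false M k i (t + 1) hi hik (by omega)
    rwa [← hL] at this
  have hbt2 : (uWord M k i)[(t + 2) * L - 1]? = some true := by
    have := Statement10Aux.uWord_true M k i (t + 1) hi hik (by omega)
    have he : (t + 1) * L + 2 * M * k = (t + 2) * L - 1 := by
      have h1 : (t + 1) * L = t * L + L := by ring
      have h2 : (t + 2) * L = t * L + 2 * L := by ring
      have : L = 2 * M * k + 1 := hL
      omega
    rwa [← hL, he] at this
  have hbf2 : (uWord M k i)[(t + 2) * L]? = some false := by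
    have := Statement10Aux.uWord_false M k i (t + 2) hi hik (by omega)
    rwa [← hL] at this
  -- transfer to s
  have hxgt : pl < (t + 1) * L := by omega
  have hyle : (t + 2) * L + 1 ≤ pl + s.length := by omega
  set a1 : ℕ := (t + 1) * L - 1 - pl with ha1
  set a2 : ℕ := (t + 2) * L - 1 - pl with ha2
  have ha1e : pl + a1 = (t + 1) * L - 1 := by omega
  have ha1e' : pl + (a1 + 1) = (t + 1) * L := by omega
  have ha2e : pl + a2 = (t + 2) * L - 1 := by omega
  have ha2e' : pl + (a2 + 1) = (t + 2) * L := by omega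
  have ha1lt : a1 + 1 < s.length := by omega
  have ha2lt : a2 + 1 < s.length := by omega
  have hs1 : s[a1]? = some true := by
    rw [← Statement10Aux.factor_getElem _ p s q hu a1 (by omega), ha1e]; exact hbt1
  have hs2 : s[a1 + 1]? = some false := by
    rw [← Statement10Aux.factor_getElem _ p s q hu (a1 + 1) ha1lt, ha1e']; exact hbf1
  have hs3 : s[a2]? = some true := by
    rw [← Statement10Aux.factor_getElem _ p s q hu a2 (by omega), ha2e]; exact hbt2
  have hs4 : s[a2 + 1]? = some false := by
    rw [← Statement10Aux.factor_getElem _ p s q hu (a2 + 1) ha2lt, ha2e']; exact hbf2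
  -- transfer to ws.flatten
  have hw1 : ws.flatten[pw.length + a1]? = some true := by
    rw [Statement10Aux.factor_getElem _ pw s qw hflat a1 (by omega)]; exact hs1
  have hw2 : ws.flatten[pw.length + a1 + 1]? = some false := by
    rw [show pw.length + a1 + 1 = pw.length + (a1 + 1) by omega,
      Statement10Aux.factor_getElem _ pw s qw hflat (a1 + 1) ha1lt]; exact hs2
  have hw3 : ws.flatten[pw.length + a2]? = some true := by
    rw [Statement10Aux.factor_getElem _ pw s qw hflat a2 (by omega)]; exact hs3
  have hw4 : ws.flatten[pw.length + a2 + 1]? = some false := by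
    rw [show pw.length + a2 + 1 = pw.length + (a2 + 1) by omega,
      Statement10Aux.factor_getElem _ pw s qw hflat (a2 + 1) ha2lt]; exact hs4
  -- both positions are odd
  have hodd1 : (pw.length + a1) % 2 = 1 :=
    Statement10Aux.ne_pos_odd ws hws _ true false hw1 hw2 (by simp)
  have hodd2 : (pw.length + a2) % 2 = 1 :=
    Statement10Aux.ne_pos_odd ws hws _ true false hw3 hw4 (by simp)
  -- but a2 - a1 = L is odd: contradiction
  have hdiff : a2 = a1 + L := by
    have h1 : (t + 1) * L = t * L + L := by ring
    have h2 : (t + 2) * L = t * L + 2 * L := by ring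
    omega
  have hLodd : L % 2 = 1 := by
    have : L = 2 * (M * k) + 1 := by ring
    omega
  omega
end

section
/- In any group G, a product of n commutators is a product of 2n+1 squares: for all x₁, y₁, …, xₙ, yₙ ∈ G there exist z₁, …, z_{2n+1} ∈ G such that [x₁,y₁][x₂,y₂]⋯[xₙ,yₙ] = z₁² z₂² ⋯ z_{2n+1}². Consequently, sql_G(g) ≤ 2·cl_G(g) + 1 for every g ∈ [G,G]. -/
/-! A commutator times a square is a product of three squares; absorbing the commutators
one at a time into a trailing square, starting from `1 = 1 ^ 2`, turns `n` commutators into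
`2n + 1` squares. -/

open scoped commutatorElement

variable {G : Type*} [Group G]

/-- `g` is a product of `n` commutators. -/
def IsProdOfCommutators (g : G) (n : ℕ) : Prop :=
  ∃ x y : Fin n → G, g = (List.ofFn fun i => ⁅x i, y i⁆).prod

/-- Commutator length: the least `n` such that `g` is a product of `n` commutators. -/
noncomputable def cl (g : G) : ℕ := sInf {n | IsProdOfCommutators g n}

/-- `g` is a product of `n` squares. -/
def IsProdOfSquares (g : G) (n : ℕ) : Prop :=
  ∃ x : Fin n → G, g = (List.ofFn fun i => x i ^ 2).prod

/-- Square length: the least `n` such that `g` is a product of `n` squares. -/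
noncomputable def sql (g : G) : ℕ := sInf {n | IsProdOfSquares g n}

theorem commutatorElement_mul_sq (u v w : G) :
    ⁅u, v⁆ * w ^ 2 =
      (u * w⁻¹ * v) ^ 2 * (v⁻¹ * w) ^ 2 * (w⁻¹ * v * u⁻¹ * v⁻¹ * w ^ 2) ^ 2 := by
  simp only [commutatorElement_def, pow_two, mul_assoc, mul_inv_cancel_left, inv_mul_cancel_left]

theorem IsProdOfSquares.commutatorElement_mul {g : G} {m : ℕ} (hg : IsProdOfSquares g (m + 1))
    (u v : G) : IsProdOfSquares (⁅u, v⁆ * g) (m + 3) := by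
  obtain ⟨z, rfl⟩ := hg
  refine ⟨Fin.cons (u * (z 0)⁻¹ * v) <| Fin.cons (v⁻¹ * z 0) <|
    Fin.cons ((z 0)⁻¹ * v * u⁻¹ * v⁻¹ * z 0 ^ 2) (Fin.tail z), ?_⟩
  simp only [List.ofFn_succ, List.prod_cons, Fin.cons_zero, Fin.cons_succ, Fin.tail,
    ← mul_assoc, commutatorElement_mul_sq]

theorem IsProdOfCommutators.isProdOfSquares {g : G} {n : ℕ} (hg : IsProdOfCommutators g n) :
    IsProdOfSquares g (2 * n + 1) := by
  induction n generalizing g with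
  | zero => exact ⟨fun _ => 1, by obtain ⟨_, _, rfl⟩ := hg; simp⟩
  | succ n ih =>
    obtain ⟨x, y, rfl⟩ := hg
    rw [List.ofFn_succ, List.prod_cons]
    exact (ih ⟨_, _, rfl⟩).commutatorElement_mul (x 0) (y 0)

theorem isProdOfCommutators_prod {l : List G} (hl : ∀ c ∈ l, c ∈ commutatorSet G) :
    IsProdOfCommutators l.prod l.length := by
  choose x y hxy using fun i : Fin l.length => mem_commutatorSet_iff.1 (hl _ (l.get_mem i))
  exact ⟨x, y, by simp only [hxy, List.ofFn_get]⟩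

theorem exists_list_commutatorSet_prod_eq {g : G} (hg : g ∈ commutator G) :
    ∃ l : List G, (∀ c ∈ l, c ∈ commutatorSet G) ∧ l.prod = g := by
  rw [commutator_eq_closure, ← Subgroup.mem_toSubmonoid, Subgroup.closure_toSubmonoid] at hg
  obtain ⟨l, hl, rfl⟩ := Submonoid.exists_list_of_mem_closure hg
  refine ⟨l, fun c hc => ?_, rfl⟩
  rcases hl c hc with hc | ⟨a, b, hab⟩
  · exact hc
  · exact ⟨b, a, by rw [← commutatorElement_inv, hab, inv_inv]⟩

theorem statement12 {G : Type*} [Group G] :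
    (∀ (n : ℕ) (x y : Fin n → G), ∃ z : Fin (2 * n + 1) → G,
      (List.ofFn fun i => ⁅x i, y i⁆).prod = (List.ofFn fun i => z i ^ 2).prod) ∧
    (∀ g : G, g ∈ commutator G → sql g ≤ 2 * cl g + 1) := by
  refine ⟨fun n x y => IsProdOfCommutators.isProdOfSquares ⟨x, y, rfl⟩, fun g hg => ?_⟩
  obtain ⟨l, hl, rfl⟩ := exists_list_commutatorSet_prod_eq hg
  have hcl : IsProdOfCommutators l.prod (cl l.prod) :=
    Nat.sInf_mem (s := {n | IsProdOfCommutators l.prod n}) ⟨_, isProdOfCommutators_prod hl⟩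
  exact Nat.sInf_le hcl.isProdOfSquares
end

section
/- In a free group F (on an arbitrary set of generators), no nontrivial element is conjugate to its own inverse: if w, g ∈ F satisfy g w g⁻¹ = w⁻¹, then w = 1. -/
/-! Square roots are unique in a free group (`IsMulTorsionFree`), and `g w g⁻¹ = w⁻¹` makes
`w g` a square root of `g²`. -/

theorem statement15 {α : Type*} (w g : FreeGroup α) (h : g * w * g⁻¹ = w⁻¹) :
    w = 1 := by
  have hgw : g * w = w⁻¹ * g := by rw [← h, inv_mul_cancel_right]
  have hsq : (w * g) ^ 2 = g ^ 2 := by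
    calc (w * g) ^ 2 = w * (g * w) * g := by simp only [sq, mul_assoc]
      _ = g ^ 2 := by rw [hgw, mul_inv_cancel_left, sq]
  have hroot : w * g = g := pow_left_injective two_ne_zero hsq
  exact mul_eq_right.mp hroot
end

section
/- Let G be a group and φ : G → ℝ a homogeneous quasi-morphism that vanishes on the derived subgroup [G,G]. Then φ is a group homomorphism: φ(xy) = φ(x) + φ(y) for all x, y ∈ G. -/
theorem statement17 {G : Type*} [Group G] (φ : G → ℝ)
    (hquasi : ∃ C : ℝ, ∀ x y : G, |φ (x * y) - φ x - φ y| ≤ C)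
    (hhom : ∀ (g : G) (n : ℤ), φ (g ^ n) = n * φ g)
    (hvanish : ∀ g ∈ commutator G, φ g = 0) :
    ∀ x y : G, φ (x * y) = φ x + φ y := by
  obtain ⟨C, hC⟩ := hquasi
  intro x y
  have hn : ∀ g : G, ∀ n : ℕ, φ (g ^ n) = n * φ g := by
    intro g n
    have := hhom g (n : ℤ)
    rwa [zpow_natCast, Int.cast_natCast] at this
  have key : ∀ n : ℕ, (n : ℝ) * |φ (x * y) - φ x - φ y| ≤ 2 * C := by
    intro n
    set d := (x ^ n * y ^ n)⁻¹ * (x * y) ^ n with hd_def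
    have hd : d ∈ commutator G := by
      have : Abelianization.of d = 1 := by
        rw [hd_def]
        simp only [map_mul, map_inv, map_pow]
        rw [mul_pow]
        group
      exact (QuotientGroup.eq_one_iff d).mp this
    have h1 : x ^ n * y ^ n * d = (x * y) ^ n := by
      rw [hd_def, mul_inv_cancel_left]
    have e1 := hC (x ^ n * y ^ n) d
    have e2 := hC (x ^ n) (y ^ n)
    rw [h1, hvanish d hd] at e1
    rw [hn x n, hn y n] at e2
    rw [hn (x * y) n] at e1
    have : |(n : ℝ) * φ (x * y) - (n : ℝ) * φ x - (n : ℝ) * φ y| ≤ 2 * C := by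
      have := abs_sub_abs_le_abs_sub ((n : ℝ) * φ (x * y) - (n : ℝ) * φ x - (n : ℝ) * φ y) 0
      calc |(n : ℝ) * φ (x * y) - (n : ℝ) * φ x - (n : ℝ) * φ y|
          ≤ |(n : ℝ) * φ (x * y) - φ (x ^ n * y ^ n) - 0|
            + |φ (x ^ n * y ^ n) - (n : ℝ) * φ x - (n : ℝ) * φ y| := by
            have := abs_add_le ((n : ℝ) * φ (x * y) - φ (x ^ n * y ^ n) - 0)
              (φ (x ^ n * y ^ n) - (n : ℝ) * φ x - (n : ℝ) * φ y)
            calc |(n : ℝ) * φ (x * y) - (n : ℝ) * φ x - (n : ℝ) * φ y|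
                = |((n : ℝ) * φ (x * y) - φ (x ^ n * y ^ n) - 0)
                  + (φ (x ^ n * y ^ n) - (n : ℝ) * φ x - (n : ℝ) * φ y)| := by ring_nf
              _ ≤ _ := this
        _ ≤ C + C := add_le_add e1 e2
        _ = 2 * C := by ring
    have habs : |(n : ℝ) * (φ (x * y) - φ x - φ y)|
        = (n : ℝ) * |φ (x * y) - φ x - φ y| := by
      rw [abs_mul, Nat.abs_cast]
    calc (n : ℝ) * |φ (x * y) - φ x - φ y|
        = |(n : ℝ) * (φ (x * y) - φ x - φ y)| := habs.symm
      _ = |(n : ℝ) * φ (x * y) - (n : ℝ) * φ x - (n : ℝ) * φ y| := by ring_nf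
      _ ≤ 2 * C := this
  by_contra h
  have ha : 0 < |φ (x * y) - φ x - φ y| := by
    apply abs_pos.mpr
    intro h0
    apply h
    linarith [sub_eq_zero.mp (by linarith : φ (x * y) - (φ x + φ y) = 0)]
  obtain ⟨n, hn'⟩ := exists_nat_gt (2 * C / |φ (x * y) - φ x - φ y|)
  have := key n
  have : (n : ℝ) ≤ 2 * C / |φ (x * y) - φ x - φ y| := by
    rw [le_div_iff₀ ha]
    exact this
  linarith
end
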